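/- Let A = T_alg and e = 1 − v u ∈ A. Let Ω¹A denote the kernel of the multiplication map μ : A ⊗_ℂ A → A, a ⊗ b ↦ ab, regarded as an A-bimodule via a·(x ⊗ y)·b = (a x) ⊗ (y b). Then there exists an A-bimodule isomorphism θ : Ω¹A → (A ⊗_ℂ A) ⊕ ((A e) ⊗_ℂ A), where Ae = {a e : a ∈ A} and both summands carry the bimodule structure a·(x ⊗ y)·b = (a x) ⊗ (y b), such that θ(1 ⊗ u − u ⊗ 1) = (1 ⊗ 1, 0) and θ(1 ⊗ v − v ⊗ 1) = (−v ⊗ v, e ⊗ 1). -/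

import Mathlib

/-- The defining relation of the algebraic Toeplitz algebra: `U * V = 1`,
where `U = ι false` and `V = ι true` are the two generators of the free algebra. -/
inductive ToeplitzRel : FreeAlgebra ℂ Bool → FreeAlgebra ℂ Bool → Prop
  | rel : ToeplitzRel (FreeAlgebra.ι ℂ false * FreeAlgebra.ι ℂ true) 1

/-- The algebraic Toeplitz algebra: the quotient of the free `ℂ`-algebra on two
generators `U, V` by the two-sided ideal generated by `U * V - 1`. -/
abbrev Talg : Type := RingQuot ToeplitzRel

/-- The image `u` of the generator `U` in the algebraic Toeplitz algebra. -/
noncomputable def Tu : Talg := RingQuot.mkAlgHom ℂ ToeplitzRel (FreeAlgebra.ι ℂ false)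

/-- The image `v` of the generator `V` in the algebraic Toeplitz algebra. -/
noncomputable def Tv : Talg := RingQuot.mkAlgHom ℂ ToeplitzRel (FreeAlgebra.ι ℂ true)
open scoped TensorProduct

/-- The idempotent `e = 1 - v u` of the algebraic Toeplitz algebra. -/
noncomputable def Tidem : Talg := 1 - Tv * Tu

/-- The multiplication map `μ : A ⊗[ℂ] A → A`, `a ⊗ b ↦ a b`. -/
noncomputable def μT : Talg ⊗[ℂ] Talg →ₗ[ℂ] Talg := LinearMap.mul' ℂ Talg

/-- `Ω¹A`: the kernel of the multiplication map `A ⊗[ℂ] A → A`. -/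
noncomputable def ΩT : Submodule ℂ (Talg ⊗[ℂ] Talg) := LinearMap.ker μT

/-- The left ideal `A e = {a * e : a ∈ A}`, as a `ℂ`-subspace of `A`. -/
noncomputable def AeT : Submodule ℂ Talg := LinearMap.range (LinearMap.mulRight ℂ Tidem)

/-- The left action of `a ∈ A` on `A ⊗[ℂ] A`: `a • (x ⊗ y) = (a x) ⊗ y`. -/
noncomputable def lmulT (a : Talg) : Talg ⊗[ℂ] Talg →ₗ[ℂ] Talg ⊗[ℂ] Talg :=
  TensorProduct.map (LinearMap.mulLeft ℂ a) LinearMap.id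

/-- The right action of `b ∈ A` on `A ⊗[ℂ] A`: `(x ⊗ y) • b = x ⊗ (y b)`. -/
noncomputable def rmulT (b : Talg) : Talg ⊗[ℂ] Talg →ₗ[ℂ] Talg ⊗[ℂ] Talg :=
  TensorProduct.map LinearMap.id (LinearMap.mulRight ℂ b)

/-- The canonical (injective) embedding `(A e) ⊗[ℂ] A → A ⊗[ℂ] A`. -/
noncomputable def ιAeT : (AeT ⊗[ℂ] Talg) →ₗ[ℂ] Talg ⊗[ℂ] Talg :=
  TensorProduct.map AeT.subtype LinearMap.id

/-- `e ∈ A e`. -/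
theorem Tidem_mem_AeT : Tidem ∈ AeT :=
  ⟨1, by simp [LinearMap.mulRight_apply]⟩

/-- `1 ⊗ u - u ⊗ 1 ∈ Ω¹A`. -/
theorem du_mem_ΩT : (1 : Talg) ⊗ₜ[ℂ] Tu - Tu ⊗ₜ[ℂ] (1 : Talg) ∈ ΩT := by
  simp [ΩT, μT, LinearMap.mem_ker, LinearMap.mul'_apply]

/-- `1 ⊗ v - v ⊗ 1 ∈ Ω¹A`. -/
theorem dv_mem_ΩT : (1 : Talg) ⊗ₜ[ℂ] Tv - Tv ⊗ₜ[ℂ] (1 : Talg) ∈ ΩT := by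
  simp [ΩT, μT, LinearMap.mem_ker, LinearMap.mul'_apply]

abbrev TalgRing : Ring Talg := RingQuot.instRing ToeplitzRel

noncomputable section AuxDev

open TensorProduct LinearMap

attribute [local instance] TalgRing

theorem Tuv : Tu * Tv = 1 := by
  rw [Tu, Tv, ← map_mul, RingQuot.mkAlgHom_rel ℂ ToeplitzRel.rel, map_one]

theorem Tue : Tu * Tidem = 0 := by
  rw [Tidem, mul_sub, mul_one, ← mul_assoc, Tuv, one_mul, sub_self]

theorem Tev : Tidem * Tv = 0 := by
  rw [Tidem, sub_mul, one_mul, mul_assoc, Tuv, mul_one, sub_self]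

theorem Tee : Tidem * Tidem = Tidem := by
  have h : Tv * Tu * (Tv * Tu) = Tv * Tu := by
    rw [mul_assoc Tv Tu, ← mul_assoc Tu, Tuv, one_mul]
  rw [Tidem, sub_mul, one_mul, mul_sub, mul_one, h]
  simp

theorem AeT_mul_v {z : Talg} (hz : z ∈ AeT) : z * Tv = 0 := by
  obtain ⟨a, rfl⟩ := hz
  simp only [LinearMap.mulRight_apply]
  rw [mul_assoc, Tev, mul_zero]

theorem AeT_mul_e {z : Talg} (hz : z ∈ AeT) : z * Tidem = z := by
  obtain ⟨a, rfl⟩ := hz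
  simp only [LinearMap.mulRight_apply]
  rw [mul_assoc, Tee]

theorem AeT_mul_left (a : Talg) {z : Talg} (hz : z ∈ AeT) : a * z ∈ AeT := by
  obtain ⟨b, rfl⟩ := hz
  exact ⟨a * b, by simp [LinearMap.mulRight_apply, mul_assoc]⟩

@[simp] theorem lmulT_tmul (a x y : Talg) : lmulT a (x ⊗ₜ[ℂ] y) = (a * x) ⊗ₜ[ℂ] y := by
  simp [lmulT]

@[simp] theorem rmulT_tmul (b x y : Talg) : rmulT b (x ⊗ₜ[ℂ] y) = x ⊗ₜ[ℂ] (y * b) := by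
  simp [rmulT]

theorem lmulT_add_apply (a b : Talg) (m : Talg ⊗[ℂ] Talg) :
    lmulT (a + b) m = lmulT a m + lmulT b m := by
  induction m using TensorProduct.induction_on with
  | zero => simp
  | tmul x y => simp [add_mul, add_tmul]
  | add x y hx hy => simp [map_add, hx, hy]; abel

theorem lmulT_smul_apply (c : ℂ) (a : Talg) (m : Talg ⊗[ℂ] Talg) :
    lmulT (c • a) m = c • lmulT a m := by
  induction m using TensorProduct.induction_on with
  | zero => simp
  | tmul x y => simp [smul_mul_assoc, smul_tmul']
  | add x y hx hy => simp [map_add, hx, hy]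

theorem rmulT_add_apply (a b : Talg) (m : Talg ⊗[ℂ] Talg) :
    rmulT (a + b) m = rmulT a m + rmulT b m := by
  induction m using TensorProduct.induction_on with
  | zero => simp
  | tmul x y => simp [mul_add, tmul_add]
  | add x y hx hy => simp [map_add, hx, hy]; abel

theorem rmulT_smul_apply (c : ℂ) (a : Talg) (m : Talg ⊗[ℂ] Talg) :
    rmulT (c • a) m = c • rmulT a m := by
  induction m using TensorProduct.induction_on with
  | zero => simp
  | tmul x y => simp [mul_smul_comm, tmul_smul]
  | add x y hx hy => simp [map_add, hx, hy]

theorem lmulT_mul_apply (a b : Talg) (m : Talg ⊗[ℂ] Talg) :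
    lmulT (a * b) m = lmulT a (lmulT b m) := by
  induction m using TensorProduct.induction_on with
  | zero => simp
  | tmul x y => simp [mul_assoc]
  | add x y hx hy => simp [map_add, hx, hy]

theorem rmulT_mul_apply (a b : Talg) (m : Talg ⊗[ℂ] Talg) :
    rmulT (a * b) m = rmulT b (rmulT a m) := by
  induction m using TensorProduct.induction_on with
  | zero => simp
  | tmul x y => simp [mul_assoc]
  | add x y hx hy => simp [map_add, hx, hy]

@[simp] theorem lmulT_one_apply (m : Talg ⊗[ℂ] Talg) : lmulT 1 m = m := by
  induction m using TensorProduct.induction_on with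
  | zero => simp
  | tmul x y => simp
  | add x y hx hy => simp [map_add, hx, hy]

@[simp] theorem rmulT_one_apply (m : Talg ⊗[ℂ] Talg) : rmulT 1 m = m := by
  induction m using TensorProduct.induction_on with
  | zero => simp
  | tmul x y => simp
  | add x y hx hy => simp [map_add, hx, hy]

@[simp] theorem lmulT_zero_apply (m : Talg ⊗[ℂ] Talg) : lmulT 0 m = 0 := by
  induction m using TensorProduct.induction_on with
  | zero => simp
  | tmul x y => simp
  | add x y hx hy => simp [map_add, hx, hy]

@[simp] theorem rmulT_zero_apply (m : Talg ⊗[ℂ] Talg) : rmulT 0 m = 0 := by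
  induction m using TensorProduct.induction_on with
  | zero => simp
  | tmul x y => simp
  | add x y hx hy => simp [map_add, hx, hy]

theorem lmulT_rmulT_apply (a b : Talg) (m : Talg ⊗[ℂ] Talg) :
    lmulT a (rmulT b m) = rmulT b (lmulT a m) := by
  induction m using TensorProduct.induction_on with
  | zero => simp
  | tmul x y => simp
  | add x y hx hy => simp [map_add, hx, hy]

end AuxDev

noncomputable section ExtDev

open TensorProduct LinearMap

attribute [local instance] TalgRing

/-- Square-zero extension carrier: `A × (A⊗A) × (A⊗A)`. -/
@[ext] structure ExtT where
  a : Talg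
  m : Talg ⊗[ℂ] Talg
  n : Talg ⊗[ℂ] Talg

namespace ExtT

instance : Add ExtT := ⟨fun x y => ⟨x.a + y.a, x.m + y.m, x.n + y.n⟩⟩
instance : Zero ExtT := ⟨⟨0, 0, 0⟩⟩
instance : Neg ExtT := ⟨fun x => ⟨-x.a, -x.m, -x.n⟩⟩
instance : SMul ℂ ExtT := ⟨fun c x => ⟨c • x.a, c • x.m, c • x.n⟩⟩
instance : One ExtT := ⟨⟨1, 0, 0⟩⟩
instance : Mul ExtT :=
  ⟨fun x y => ⟨x.a * y.a, lmulT x.a y.m + rmulT y.a x.m, lmulT x.a y.n + rmulT y.a x.n⟩⟩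

@[simp] theorem add_a (x y : ExtT) : (x + y).a = x.a + y.a := rfl
@[simp] theorem add_m (x y : ExtT) : (x + y).m = x.m + y.m := rfl
@[simp] theorem add_n (x y : ExtT) : (x + y).n = x.n + y.n := rfl
@[simp] theorem zero_a : (0 : ExtT).a = 0 := rfl
@[simp] theorem zero_m : (0 : ExtT).m = 0 := rfl
@[simp] theorem zero_n : (0 : ExtT).n = 0 := rfl
@[simp] theorem neg_a (x : ExtT) : (-x).a = -x.a := rfl
@[simp] theorem neg_m (x : ExtT) : (-x).m = -x.m := rfl
@[simp] theorem neg_n (x : ExtT) : (-x).n = -x.n := rfl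
@[simp] theorem smul_a (c : ℂ) (x : ExtT) : (c • x).a = c • x.a := rfl
@[simp] theorem smul_m (c : ℂ) (x : ExtT) : (c • x).m = c • x.m := rfl
@[simp] theorem smul_n (c : ℂ) (x : ExtT) : (c • x).n = c • x.n := rfl
@[simp] theorem one_a : (1 : ExtT).a = 1 := rfl
@[simp] theorem one_m : (1 : ExtT).m = 0 := rfl
@[simp] theorem one_n : (1 : ExtT).n = 0 := rfl
@[simp] theorem mul_a (x y : ExtT) : (x * y).a = x.a * y.a := rfl
@[simp] theorem mul_m (x y : ExtT) : (x * y).m = lmulT x.a y.m + rmulT y.a x.m := rfl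
@[simp] theorem mul_n (x y : ExtT) : (x * y).n = lmulT x.a y.n + rmulT y.a x.n := rfl

instance : AddCommGroup ExtT where
  add_assoc x y z := by ext <;> simp [add_assoc]
  zero_add x := by ext <;> simp
  add_zero x := by ext <;> simp
  add_comm x y := by ext <;> simp [add_comm]
  neg_add_cancel x := by ext <;> simp <;> exact TensorProduct.neg_add_cancel _
  nsmul := nsmulRec
  zsmul := zsmulRec

instance : Module ℂ ExtT where
  one_smul x := by ext <;> simp
  mul_smul c d x := by ext <;> simp [mul_smul]
  smul_zero c := by ext <;> simp
  smul_add c x y := by ext <;> simp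
  add_smul c d x := by ext <;> simp [add_smul]
  zero_smul x := by ext <;> simp

instance : Ring ExtT := { (inferInstance : AddCommGroup ExtT) with
  mul_assoc := fun x y z => by
    ext
    · simp [mul_assoc]
    · simp only [mul_m, mul_a, map_add, lmulT_mul_apply, rmulT_mul_apply, lmulT_rmulT_apply]
      abel
    · simp only [mul_n, mul_a, map_add, lmulT_mul_apply, rmulT_mul_apply, lmulT_rmulT_apply]
      abel
  one_mul := fun x => by ext <;> simp
  mul_one := fun x => by ext <;> simp
  left_distrib := fun x y z => by
    ext
    · simp [mul_add]
    · simp only [mul_m, add_a, add_m, map_add, rmulT_add_apply]; abel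
    · simp only [mul_n, add_a, add_n, map_add, rmulT_add_apply]; abel
  right_distrib := fun x y z => by
    ext
    · simp [add_mul]
    · simp only [mul_m, add_a, add_m, map_add, lmulT_add_apply]; abel
    · simp only [mul_n, add_a, add_n, map_add, lmulT_add_apply]; abel
  zero_mul := fun x => by ext <;> simp
  mul_zero := fun x => by ext <;> simp }

instance : Algebra ℂ ExtT :=
  Algebra.ofModule
    (fun r x y => by
      ext
      · simp [smul_mul_assoc]
      · simp only [mul_m, smul_a, smul_m, lmulT_smul_apply, map_smul, smul_add]
      · simp only [mul_n, smul_a, smul_n, lmulT_smul_apply, map_smul, smul_add])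
    (fun r x y => by
      ext
      · simp [mul_smul_comm]
      · simp only [mul_m, smul_a, smul_m, rmulT_smul_apply, map_smul, smul_add]
      · simp only [mul_n, smul_a, smul_n, rmulT_smul_apply, map_smul, smul_add])

@[simp] theorem algebraMap_a (r : ℂ) : (algebraMap ℂ ExtT r).a = algebraMap ℂ Talg r := by
  rw [Algebra.algebraMap_eq_smul_one, Algebra.algebraMap_eq_smul_one]
  simp

@[simp] theorem algebraMap_m (r : ℂ) : (algebraMap ℂ ExtT r).m = 0 := by
  rw [Algebra.algebraMap_eq_smul_one]; simp

@[simp] theorem algebraMap_n (r : ℂ) : (algebraMap ℂ ExtT r).n = 0 := by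
  rw [Algebra.algebraMap_eq_smul_one]; simp

end ExtT

/-- Generators for the square-zero extension homomorphism. -/
def genT : Bool → ExtT
  | false => ⟨Tu, (1 : Talg) ⊗ₜ[ℂ] (1 : Talg), 0⟩
  | true => ⟨Tv, -(Tv ⊗ₜ[ℂ] Tv), Tidem ⊗ₜ[ℂ] (1 : Talg)⟩

theorem genT_rel :
    (FreeAlgebra.lift ℂ genT) (FreeAlgebra.ι ℂ false * FreeAlgebra.ι ℂ true) =
      (FreeAlgebra.lift ℂ genT) 1 := by
  rw [map_mul, map_one, FreeAlgebra.lift_ι_apply, FreeAlgebra.lift_ι_apply]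
  show genT false * genT true = 1
  ext
  · show Tu * Tv = 1
    exact Tuv
  · show lmulT Tu (-(Tv ⊗ₜ[ℂ] Tv)) + rmulT Tv ((1 : Talg) ⊗ₜ[ℂ] (1 : Talg)) = 0
    rw [map_neg, lmulT_tmul, rmulT_tmul, Tuv, one_mul, neg_add_cancel]
  · show lmulT Tu (Tidem ⊗ₜ[ℂ] (1 : Talg)) + rmulT Tv 0 = 0
    rw [map_zero, add_zero, lmulT_tmul, Tue, TensorProduct.zero_tmul]

/-- The square-zero extension homomorphism encoding the derivation `D`. -/
def ρT : Talg →ₐ[ℂ] ExtT :=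
  RingQuot.liftAlgHom ℂ ⟨FreeAlgebra.lift ℂ genT, fun x y h => by cases h; exact genT_rel⟩

theorem ρT_mk (p : FreeAlgebra ℂ Bool) :
    ρT (RingQuot.mkAlgHom ℂ ToeplitzRel p) = FreeAlgebra.lift ℂ genT p :=
  RingQuot.liftAlgHom_mkAlgHom_apply ℂ _ _ p

theorem ρT_fst (x : Talg) : (ρT x).a = x := by
  obtain ⟨p, rfl⟩ := RingQuot.mkAlgHom_surjective ℂ ToeplitzRel x
  rw [ρT_mk]
  induction p using FreeAlgebra.induction with
  | grade0 r => rw [AlgHom.commutes, AlgHom.commutes, ExtT.algebraMap_a]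
  | grade1 x => cases x <;> rw [FreeAlgebra.lift_ι_apply] <;> rfl
  | mul a b ha hb => rw [map_mul, map_mul, ExtT.mul_a, ha, hb]
  | add a b ha hb => rw [map_add, map_add, ExtT.add_a, ha, hb]

/-- First component of the derivation. -/
def D1 : Talg →ₗ[ℂ] Talg ⊗[ℂ] Talg where
  toFun x := (ρT x).m
  map_add' x y := by show (ρT (x + y)).m = (ρT x).m + (ρT y).m; rw [map_add, ExtT.add_m]
  map_smul' c x := by show (ρT (c • x)).m = c • (ρT x).m; rw [map_smul, ExtT.smul_m]

/-- Second component of the derivation. -/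
def D2 : Talg →ₗ[ℂ] Talg ⊗[ℂ] Talg where
  toFun x := (ρT x).n
  map_add' x y := by show (ρT (x + y)).n = (ρT x).n + (ρT y).n; rw [map_add, ExtT.add_n]
  map_smul' c x := by show (ρT (c • x)).n = c • (ρT x).n; rw [map_smul, ExtT.smul_n]

@[simp] theorem D1_u : D1 Tu = (1 : Talg) ⊗ₜ[ℂ] (1 : Talg) := by
  show (ρT Tu).m = _
  rw [Tu, ρT_mk, FreeAlgebra.lift_ι_apply]; rfl

@[simp] theorem D2_u : D2 Tu = 0 := by
  show (ρT Tu).n = _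
  rw [Tu, ρT_mk, FreeAlgebra.lift_ι_apply]; rfl

@[simp] theorem D1_v : D1 Tv = -(Tv ⊗ₜ[ℂ] Tv) := by
  show (ρT Tv).m = _
  rw [Tv, ρT_mk, FreeAlgebra.lift_ι_apply]; rfl

@[simp] theorem D2_v : D2 Tv = Tidem ⊗ₜ[ℂ] (1 : Talg) := by
  show (ρT Tv).n = _
  rw [Tv, ρT_mk, FreeAlgebra.lift_ι_apply]; rfl

@[simp] theorem D1_one : D1 1 = 0 := by
  show (ρT 1).m = _
  rw [map_one, ExtT.one_m]

@[simp] theorem D2_one : D2 1 = 0 := by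
  show (ρT 1).n = _
  rw [map_one, ExtT.one_n]

theorem D1_mul (x y : Talg) : D1 (x * y) = lmulT x (D1 y) + rmulT y (D1 x) := by
  show (ρT (x * y)).m = lmulT x ((ρT y).m) + rmulT y ((ρT x).m)
  rw [map_mul, ExtT.mul_m, ρT_fst, ρT_fst]

theorem D2_mul (x y : Talg) : D2 (x * y) = lmulT x (D2 y) + rmulT y (D2 x) := by
  show (ρT (x * y)).n = lmulT x ((ρT y).n) + rmulT y ((ρT x).n)
  rw [map_mul, ExtT.mul_n, ρT_fst, ρT_fst]

theorem D1_algebraMap (r : ℂ) : D1 (algebraMap ℂ Talg r) = 0 := by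
  rw [Algebra.algebraMap_eq_smul_one, map_smul, D1_one, smul_zero]

theorem D2_algebraMap (r : ℂ) : D2 (algebraMap ℂ Talg r) = 0 := by
  rw [Algebra.algebraMap_eq_smul_one, map_smul, D2_one, smul_zero]

end ExtDev

noncomputable section MapsDev

open TensorProduct LinearMap

attribute [local instance] TalgRing

/-- `lmulT` as a bilinear map. -/
def lmulB : Talg →ₗ[ℂ] (Talg ⊗[ℂ] Talg) →ₗ[ℂ] Talg ⊗[ℂ] Talg :=
  LinearMap.mk₂ ℂ (fun a m => lmulT a m) lmulT_add_apply lmulT_smul_apply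
    (fun a m n => map_add (lmulT a) m n) (fun c a m => map_smul (lmulT a) c m)

/-- First component of `θ` on all of `A ⊗ A`. -/
def Φ1 : Talg ⊗[ℂ] Talg →ₗ[ℂ] Talg ⊗[ℂ] Talg :=
  TensorProduct.lift (lmulB.compl₂ D1)

@[simp] theorem Φ1_tmul (x y : Talg) : Φ1 (x ⊗ₜ[ℂ] y) = lmulT x (D1 y) := by
  simp [Φ1, lmulB]

/-- `x ↦ x e` as a map into `Ae`. -/
def reT : Talg →ₗ[ℂ] AeT :=
  (LinearMap.mulRight ℂ Tidem).codRestrict AeT (fun x => ⟨x, rfl⟩)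

@[simp] theorem reT_apply (x : Talg) : (reT x : Talg) = x * Tidem := rfl

/-- Left multiplication by `a` on `Ae`. -/
def lAT (a : Talg) : AeT →ₗ[ℂ] AeT :=
  ((LinearMap.mulLeft ℂ a).comp AeT.subtype).codRestrict AeT (fun z => AeT_mul_left a z.2)

@[simp] theorem lAT_apply (a : Talg) (z : AeT) : (lAT a z : Talg) = a * (z : Talg) := rfl

/-- `x ⊗ y ↦ (x e) ⊗ y : A ⊗ A → Ae ⊗ A`. -/
def qT : Talg ⊗[ℂ] Talg →ₗ[ℂ] AeT ⊗[ℂ] Talg :=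
  TensorProduct.map reT LinearMap.id

@[simp] theorem qT_tmul (x y : Talg) : qT (x ⊗ₜ[ℂ] y) = reT x ⊗ₜ[ℂ] y := rfl

/-- Left multiplication by `a` on `Ae ⊗ A`. -/
def lAmap (a : Talg) : AeT ⊗[ℂ] Talg →ₗ[ℂ] AeT ⊗[ℂ] Talg :=
  TensorProduct.map (lAT a) LinearMap.id

@[simp] theorem lAmap_tmul (a : Talg) (z : AeT) (y : Talg) :
    lAmap a (z ⊗ₜ[ℂ] y) = lAT a z ⊗ₜ[ℂ] y := rfl

theorem lAmap_add_apply (a b : Talg) (w : AeT ⊗[ℂ] Talg) :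
    lAmap (a + b) w = lAmap a w + lAmap b w := by
  induction w using TensorProduct.induction_on with
  | zero => simp
  | tmul z y =>
      simp only [lAmap_tmul]
      rw [show lAT (a + b) z = lAT a z + lAT b z from Subtype.ext (by simp [add_mul]),
        add_tmul]
  | add x y hx hy => simp [map_add, hx, hy]; abel

theorem lAmap_smul_apply (c : ℂ) (a : Talg) (w : AeT ⊗[ℂ] Talg) :
    lAmap (c • a) w = c • lAmap a w := by
  induction w using TensorProduct.induction_on with
  | zero => simp
  | tmul z y =>
      simp only [lAmap_tmul]
      rw [show lAT (c • a) z = c • lAT a z from Subtype.ext (by simp [smul_mul_assoc]),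
        smul_tmul']
  | add x y hx hy => simp [map_add, hx, hy]

theorem lAmap_mul_apply (a b : Talg) (w : AeT ⊗[ℂ] Talg) :
    lAmap (a * b) w = lAmap a (lAmap b w) := by
  induction w using TensorProduct.induction_on with
  | zero => simp
  | tmul z y =>
      simp only [lAmap_tmul]
      rw [show lAT (a * b) z = lAT a (lAT b z) from Subtype.ext (by simp [mul_assoc])]
  | add x y hx hy => simp [map_add, hx, hy]

theorem lAmap_zero_apply (w : AeT ⊗[ℂ] Talg) : lAmap 0 w = 0 := by
  induction w using TensorProduct.induction_on with
  | zero => simp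
  | tmul z y =>
      simp only [lAmap_tmul]
      rw [show lAT (0 : Talg) z = 0 from Subtype.ext (by simp), zero_tmul]
  | add x y hx hy => simp [map_add, hx, hy]

theorem lAmap_one_apply (w : AeT ⊗[ℂ] Talg) : lAmap 1 w = w := by
  induction w using TensorProduct.induction_on with
  | zero => simp
  | tmul z y =>
      simp only [lAmap_tmul]
      rw [show lAT (1 : Talg) z = z from Subtype.ext (by simp)]
  | add x y hx hy => simp [map_add, hx, hy]

/-- `lAmap` as a bilinear map. -/
def lABm : Talg →ₗ[ℂ] (AeT ⊗[ℂ] Talg) →ₗ[ℂ] AeT ⊗[ℂ] Talg :=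
  LinearMap.mk₂ ℂ (fun a w => lAmap a w) lAmap_add_apply lAmap_smul_apply
    (fun a m n => map_add (lAmap a) m n) (fun c a m => map_smul (lAmap a) c m)

/-- Second component of `θ` on all of `A ⊗ A`. -/
def F2 : Talg ⊗[ℂ] Talg →ₗ[ℂ] AeT ⊗[ℂ] Talg :=
  TensorProduct.lift (lABm.compl₂ (qT ∘ₗ D2))

@[simp] theorem F2_tmul (x y : Talg) : F2 (x ⊗ₜ[ℂ] y) = lAmap x (qT (D2 y)) := by
  simp [F2, lABm]

/-- `x ⊗ y ↦ x ⊗ u y - x u ⊗ y`. -/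
def ψ1 : Talg ⊗[ℂ] Talg →ₗ[ℂ] Talg ⊗[ℂ] Talg :=
  TensorProduct.map LinearMap.id (LinearMap.mulLeft ℂ Tu) -
    TensorProduct.map (LinearMap.mulRight ℂ Tu) LinearMap.id

@[simp] theorem ψ1_tmul (x y : Talg) :
    ψ1 (x ⊗ₜ[ℂ] y) = x ⊗ₜ[ℂ] (Tu * y) - (x * Tu) ⊗ₜ[ℂ] y := by
  simp [ψ1]

/-- `z ⊗ y ↦ z ⊗ v y : Ae ⊗ A → A ⊗ A`. -/
def ψ2 : AeT ⊗[ℂ] Talg →ₗ[ℂ] Talg ⊗[ℂ] Talg :=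
  TensorProduct.map AeT.subtype (LinearMap.mulLeft ℂ Tv)

@[simp] theorem ψ2_tmul (z : AeT) (y : Talg) :
    ψ2 (z ⊗ₜ[ℂ] y) = (z : Talg) ⊗ₜ[ℂ] (Tv * y) := by
  simp [ψ2]

/-- `x ⊗ y ↦ (x e) ⊗ (v y)`. -/
def KT : Talg ⊗[ℂ] Talg →ₗ[ℂ] Talg ⊗[ℂ] Talg :=
  TensorProduct.map (LinearMap.mulRight ℂ Tidem) (LinearMap.mulLeft ℂ Tv)

@[simp] theorem KT_tmul (x y : Talg) : KT (x ⊗ₜ[ℂ] y) = (x * Tidem) ⊗ₜ[ℂ] (Tv * y) := by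
  simp [KT]

theorem ψ2_qT_apply (w : Talg ⊗[ℂ] Talg) : ψ2 (qT w) = KT w := by
  induction w using TensorProduct.induction_on with
  | zero => simp
  | tmul x y => simp
  | add x y hx hy => simp [map_add, hx, hy]

theorem ψ2_lAmap_apply (a : Talg) (w : AeT ⊗[ℂ] Talg) :
    ψ2 (lAmap a w) = lmulT a (ψ2 w) := by
  induction w using TensorProduct.induction_on with
  | zero => simp
  | tmul z y => simp [mul_assoc]
  | add x y hx hy => simp [map_add, hx, hy]

theorem ψ1_lmulT_apply (a : Talg) (m : Talg ⊗[ℂ] Talg) :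
    ψ1 (lmulT a m) = lmulT a (ψ1 m) := by
  induction m using TensorProduct.induction_on with
  | zero => simp
  | tmul x y => simp [mul_assoc]
  | add x y hx hy => simp [map_add, hx, hy]

theorem ψ1_rmulT_apply (b : Talg) (m : Talg ⊗[ℂ] Talg) :
    ψ1 (rmulT b m) = rmulT b (ψ1 m) := by
  induction m using TensorProduct.induction_on with
  | zero => simp
  | tmul x y => simp [mul_assoc]
  | add x y hx hy => simp [map_add, hx, hy]

theorem KT_lmulT_apply (a : Talg) (m : Talg ⊗[ℂ] Talg) :
    KT (lmulT a m) = lmulT a (KT m) := by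
  induction m using TensorProduct.induction_on with
  | zero => simp
  | tmul x y => simp [mul_assoc]
  | add x y hx hy => simp [map_add, hx, hy]

theorem KT_rmulT_apply (b : Talg) (m : Talg ⊗[ℂ] Talg) :
    KT (rmulT b m) = rmulT b (KT m) := by
  induction m using TensorProduct.induction_on with
  | zero => simp
  | tmul x y => simp [mul_assoc]
  | add x y hx hy => simp [map_add, hx, hy]

theorem qT_lmulT_apply (a : Talg) (m : Talg ⊗[ℂ] Talg) :
    qT (lmulT a m) = lAmap a (qT m) := by
  induction m using TensorProduct.induction_on with
  | zero => simp
  | tmul x y =>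
      simp only [lmulT_tmul, qT_tmul, lAmap_tmul]
      rw [show reT (a * x) = lAT a (reT x) from Subtype.ext (by simp [mul_assoc])]
  | add x y hx hy => simp [map_add, hx, hy]

theorem qT_rmulT_apply (b : Talg) (m : Talg ⊗[ℂ] Talg) :
    qT (rmulT b m) = TensorProduct.map LinearMap.id (LinearMap.mulRight ℂ b) (qT m) := by
  induction m using TensorProduct.induction_on with
  | zero => simp
  | tmul x y => simp
  | add x y hx hy => simp [map_add, hx, hy]

/-- The master pointwise identity: `ψ₁(D₁ y) + K(D₂ y) = 1 ⊗ y - y ⊗ 1`. -/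
theorem masterH (y : Talg) :
    ψ1 (D1 y) + KT (D2 y) = (1 : Talg) ⊗ₜ[ℂ] y - y ⊗ₜ[ℂ] (1 : Talg) := by
  obtain ⟨p, rfl⟩ := RingQuot.mkAlgHom_surjective ℂ ToeplitzRel y
  induction p using FreeAlgebra.induction with
  | grade0 r =>
      rw [AlgHom.commutes, D1_algebraMap, D2_algebraMap, map_zero, map_zero,
        Algebra.algebraMap_eq_smul_one]
      rw [tmul_smul, smul_tmul']
      simp [smul_tmul]
  | grade1 x =>
      cases x
      · show ψ1 (D1 Tu) + KT (D2 Tu) = (1 : Talg) ⊗ₜ[ℂ] Tu - Tu ⊗ₜ[ℂ] (1 : Talg)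
        rw [D1_u, D2_u, map_zero, add_zero, ψ1_tmul]
        simp
      · show ψ1 (D1 Tv) + KT (D2 Tv) = (1 : Talg) ⊗ₜ[ℂ] Tv - Tv ⊗ₜ[ℂ] (1 : Talg)
        rw [D1_v, D2_v, map_neg, ψ1_tmul, KT_tmul, Tee, Tuv, mul_one]
        rw [Tidem, sub_tmul]
        abel
  | mul p q hp hq =>
      set x := RingQuot.mkAlgHom ℂ ToeplitzRel p with hx
      set y := RingQuot.mkAlgHom ℂ ToeplitzRel q with hy
      rw [map_mul, D1_mul, D2_mul, map_add, map_add, ψ1_lmulT_apply, ψ1_rmulT_apply,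
        KT_lmulT_apply, KT_rmulT_apply]
      calc lmulT x (ψ1 (D1 y)) + rmulT y (ψ1 (D1 x)) +
            (lmulT x (KT (D2 y)) + rmulT y (KT (D2 x)))
          = lmulT x (ψ1 (D1 y) + KT (D2 y)) + rmulT y (ψ1 (D1 x) + KT (D2 x)) := by
            rw [map_add, map_add]; abel
        _ = lmulT x ((1 : Talg) ⊗ₜ[ℂ] y - y ⊗ₜ[ℂ] (1 : Talg)) +
            rmulT y ((1 : Talg) ⊗ₜ[ℂ] x - x ⊗ₜ[ℂ] (1 : Talg)) := by rw [hp, hq]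
        _ = (1 : Talg) ⊗ₜ[ℂ] (x * y) - (x * y) ⊗ₜ[ℂ] (1 : Talg) := by
            simp only [map_sub, lmulT_tmul, rmulT_tmul, mul_one, one_mul]
            abel
  | add p q hp hq =>
      set x := RingQuot.mkAlgHom ℂ ToeplitzRel p with hx
      set y := RingQuot.mkAlgHom ℂ ToeplitzRel q with hy
      rw [map_add, map_add, map_add, map_add, map_add]
      calc ψ1 (D1 x) + ψ1 (D1 y) + (KT (D2 x) + KT (D2 y))
          = (ψ1 (D1 x) + KT (D2 x)) + (ψ1 (D1 y) + KT (D2 y)) := by abel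
        _ = ((1 : Talg) ⊗ₜ[ℂ] x - x ⊗ₜ[ℂ] (1 : Talg)) +
            ((1 : Talg) ⊗ₜ[ℂ] y - y ⊗ₜ[ℂ] (1 : Talg)) := by rw [hp, hq]
        _ = (1 : Talg) ⊗ₜ[ℂ] (x + y) - (x + y) ⊗ₜ[ℂ] (1 : Talg) := by
            rw [tmul_add, add_tmul]; abel

end MapsDev

noncomputable section EquivDev

open TensorProduct LinearMap

attribute [local instance] TalgRing

theorem c1_apply (m : Talg ⊗[ℂ] Talg) : Φ1 (ψ1 m) = m := by
  induction m using TensorProduct.induction_on with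
  | zero => simp
  | tmul x y =>
      rw [ψ1_tmul, map_sub, Φ1_tmul, Φ1_tmul, D1_mul, D1_u, map_add, lmulT_mul_apply,
        rmulT_tmul, one_mul]
      simp
  | add x y hx hy => simp [map_add, hx, hy]

theorem c2_apply (w : AeT ⊗[ℂ] Talg) : Φ1 (ψ2 w) = 0 := by
  induction w using TensorProduct.induction_on with
  | zero => simp
  | tmul z y =>
      rw [ψ2_tmul, Φ1_tmul, D1_mul, map_add, ← lmulT_mul_apply, AeT_mul_v z.2,
        lmulT_zero_apply, zero_add, D1_v]
      simp [AeT_mul_v z.2]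
  | add x y hx hy => simp [map_add, hx, hy]

theorem c3_apply (m : Talg ⊗[ℂ] Talg) : F2 (ψ1 m) = 0 := by
  induction m using TensorProduct.induction_on with
  | zero => simp
  | tmul x y =>
      rw [ψ1_tmul, map_sub, F2_tmul, F2_tmul, D2_mul, D2_u, map_zero, add_zero,
        qT_lmulT_apply, ← lAmap_mul_apply, sub_self]
  | add x y hx hy => simp [map_add, hx, hy]

theorem c4_apply (w : AeT ⊗[ℂ] Talg) : F2 (ψ2 w) = w := by
  induction w using TensorProduct.induction_on with
  | zero => simp
  | tmul z y =>
      rw [ψ2_tmul, F2_tmul, D2_mul, D2_v, map_add, qT_lmulT_apply, map_add,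
        ← lAmap_mul_apply, AeT_mul_v z.2, lAmap_zero_apply, zero_add, rmulT_tmul, one_mul,
        qT_tmul, lAmap_tmul]
      rw [show lAT (z : Talg) (reT Tidem) = z from
        Subtype.ext (by simp [Tee, AeT_mul_e z.2])]
  | add x y hx hy => simp [map_add, hx, hy]

/-- The second master identity: `ψ₁ ∘ Φ₁ + ψ₂ ∘ F₂ = id - (μ ⊗ 1)`. -/
theorem master2 (m : Talg ⊗[ℂ] Talg) :
    ψ1 (Φ1 m) + ψ2 (F2 m) = m - (μT m) ⊗ₜ[ℂ] (1 : Talg) := by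
  induction m using TensorProduct.induction_on with
  | zero => simp
  | tmul x y =>
      rw [Φ1_tmul, F2_tmul, ψ1_lmulT_apply, ψ2_lAmap_apply, ψ2_qT_apply, ← map_add,
        masterH y, map_sub, lmulT_tmul, lmulT_tmul, mul_one]
      rw [show μT (x ⊗ₜ[ℂ] y) = x * y from LinearMap.mul'_apply]
  | add x y hx hy =>
      rw [map_add, map_add, map_add, map_add, map_add, add_tmul]
      calc ψ1 (Φ1 x) + ψ1 (Φ1 y) + (ψ2 (F2 x) + ψ2 (F2 y))
          = (ψ1 (Φ1 x) + ψ2 (F2 x)) + (ψ1 (Φ1 y) + ψ2 (F2 y)) := by abel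
        _ = (x - (μT x) ⊗ₜ[ℂ] (1 : Talg)) + (y - (μT y) ⊗ₜ[ℂ] (1 : Talg)) := by
            rw [hx, hy]
        _ = _ := by abel

/-- `ψ` lands in `Ω¹`. -/
theorem ψ_mem (n : (Talg ⊗[ℂ] Talg) × (AeT ⊗[ℂ] Talg)) : ψ1 n.1 + ψ2 n.2 ∈ ΩT := by
  rw [ΩT, LinearMap.mem_ker, map_add]
  have h1 : μT (ψ1 n.1) = 0 := by
    induction n.1 using TensorProduct.induction_on with
    | zero => simp
    | tmul x y =>
        rw [ψ1_tmul, map_sub]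
        rw [show μT (x ⊗ₜ[ℂ] (Tu * y)) = x * (Tu * y) from LinearMap.mul'_apply,
          show μT ((x * Tu) ⊗ₜ[ℂ] y) = (x * Tu) * y from LinearMap.mul'_apply,
          mul_assoc, sub_self]
    | add x y hx hy => rw [map_add, map_add, hx, hy, add_zero]
  have h2 : μT (ψ2 n.2) = 0 := by
    induction n.2 using TensorProduct.induction_on with
    | zero => simp
    | tmul z y =>
        rw [ψ2_tmul,
          show μT ((z : Talg) ⊗ₜ[ℂ] (Tv * y)) = (z : Talg) * (Tv * y) from
            LinearMap.mul'_apply,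
          ← mul_assoc, AeT_mul_v z.2, zero_mul]
    | add x y hx hy => rw [map_add, map_add, hx, hy, add_zero]
  rw [h1, h2, add_zero]

/-- The inverse map `Ψ : (A⊗A) × (Ae⊗A) → Ω¹`. -/
def ΨT : ((Talg ⊗[ℂ] Talg) × (AeT ⊗[ℂ] Talg)) →ₗ[ℂ] ΩT :=
  (ψ1.coprod ψ2).codRestrict ΩT ψ_mem

/-- The forward map `F : Ω¹ → (A⊗A) × (Ae⊗A)`. -/
def FT : ΩT →ₗ[ℂ] (Talg ⊗[ℂ] Talg) × (AeT ⊗[ℂ] Talg) :=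
  (Φ1.comp ΩT.subtype).prod (F2.comp ΩT.subtype)

theorem FT_ΨT (n : (Talg ⊗[ℂ] Talg) × (AeT ⊗[ℂ] Talg)) : FT (ΨT n) = n := by
  obtain ⟨n1, n2⟩ := n
  have hval : ((ΨT (n1, n2) : ΩT) : Talg ⊗[ℂ] Talg) = ψ1 n1 + ψ2 n2 := rfl
  apply Prod.ext
  · show Φ1 ((ΨT (n1, n2) : ΩT) : Talg ⊗[ℂ] Talg) = n1
    rw [hval, map_add, c1_apply, c2_apply, add_zero]
  · show F2 ((ΨT (n1, n2) : ΩT) : Talg ⊗[ℂ] Talg) = n2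
    rw [hval, map_add, c3_apply, c4_apply, zero_add]

theorem ΨT_FT (ω : ΩT) : ΨT (FT ω) = ω := by
  apply Subtype.ext
  show ψ1 (Φ1 (ω : Talg ⊗[ℂ] Talg)) + ψ2 (F2 (ω : Talg ⊗[ℂ] Talg)) = (ω : Talg ⊗[ℂ] Talg)
  rw [master2]
  have : μT (ω : Talg ⊗[ℂ] Talg) = 0 := ω.2
  rw [this, zero_tmul, sub_zero]

/-- The bimodule isomorphism `θ`. -/
def θT : ΩT ≃ₗ[ℂ] (Talg ⊗[ℂ] Talg) × (AeT ⊗[ℂ] Talg) :=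
  LinearEquiv.ofLinear FT ΨT (LinearMap.ext FT_ΨT) (LinearMap.ext ΨT_FT)

theorem θT_apply (ω : ΩT) :
    θT ω = (Φ1 (ω : Talg ⊗[ℂ] Talg), F2 (ω : Talg ⊗[ℂ] Talg)) := rfl

-- Equivariance helper lemmas
theorem Φ1_lmulT_apply (a : Talg) (m : Talg ⊗[ℂ] Talg) :
    Φ1 (lmulT a m) = lmulT a (Φ1 m) := by
  induction m using TensorProduct.induction_on with
  | zero => simp
  | tmul x y => rw [lmulT_tmul, Φ1_tmul, Φ1_tmul, lmulT_mul_apply]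
  | add x y hx hy => simp [map_add, hx, hy]

theorem ι_lAmap_apply (a : Talg) (w : AeT ⊗[ℂ] Talg) :
    ιAeT (lAmap a w) = lmulT a (ιAeT w) := by
  induction w using TensorProduct.induction_on with
  | zero => simp
  | tmul z y =>
      rw [lAmap_tmul]
      show ((lAT a z : Talg)) ⊗ₜ[ℂ] y = lmulT a ((z : Talg) ⊗ₜ[ℂ] y)
      rw [lAT_apply, lmulT_tmul]
  | add x y hx hy => simp [map_add, hx, hy]

theorem ιF2_lmulT_apply (a : Talg) (m : Talg ⊗[ℂ] Talg) :
    ιAeT (F2 (lmulT a m)) = lmulT a (ιAeT (F2 m)) := by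
  induction m using TensorProduct.induction_on with
  | zero => simp
  | tmul x y =>
      rw [lmulT_tmul, F2_tmul, F2_tmul, lAmap_mul_apply, ι_lAmap_apply, ι_lAmap_apply]
  | add x y hx hy => simp [map_add, hx, hy]

theorem Φ1_rmulT_apply (b : Talg) (m : Talg ⊗[ℂ] Talg) :
    Φ1 (rmulT b m) = rmulT b (Φ1 m) + lmulT (μT m) (D1 b) := by
  induction m using TensorProduct.induction_on with
  | zero => simp
  | tmul x y =>
      rw [rmulT_tmul, Φ1_tmul, D1_mul, map_add, ← lmulT_mul_apply, lmulT_rmulT_apply,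
        Φ1_tmul, show μT (x ⊗ₜ[ℂ] y) = x * y from LinearMap.mul'_apply]
      abel
  | add x y hx hy =>
      have hμ : μT (x + y) = μT x + μT y := map_add μT x y
      rw [map_add, map_add, map_add, map_add, hx, hy, hμ, lmulT_add_apply]
      abel

/-- `x ⊗ y ↦ (x e) ⊗ y` on `A ⊗ A`. -/
theorem ιqT_apply (x y : Talg) : ιAeT (qT (x ⊗ₜ[ℂ] y)) = (x * Tidem) ⊗ₜ[ℂ] y := rfl

theorem ιqT_lmulT_apply (a : Talg) (m : Talg ⊗[ℂ] Talg) :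
    ιAeT (qT (lmulT a m)) = lmulT a (ιAeT (qT m)) := by
  rw [qT_lmulT_apply, ι_lAmap_apply]

theorem ιqT_rmulT_apply (b : Talg) (m : Talg ⊗[ℂ] Talg) :
    ιAeT (qT (rmulT b m)) = rmulT b (ιAeT (qT m)) := by
  induction m using TensorProduct.induction_on with
  | zero => simp
  | tmul x y => rw [rmulT_tmul, ιqT_apply, ιqT_apply, rmulT_tmul]
  | add x y hx hy => simp [map_add, hx, hy]

theorem ιF2_rmulT_apply (b : Talg) (m : Talg ⊗[ℂ] Talg) :
    ιAeT (F2 (rmulT b m)) = rmulT b (ιAeT (F2 m)) + lmulT (μT m) (ιAeT (qT (D2 b))) := by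
  induction m using TensorProduct.induction_on with
  | zero => simp
  | tmul x y =>
      rw [rmulT_tmul, F2_tmul, F2_tmul, D2_mul, map_add, map_add, map_add, ι_lAmap_apply,
        ι_lAmap_apply, ιqT_lmulT_apply, ιqT_rmulT_apply, ← lmulT_mul_apply,
        lmulT_rmulT_apply, show μT (x ⊗ₜ[ℂ] y) = x * y from LinearMap.mul'_apply,
        ι_lAmap_apply]
      abel
  | add x y hx hy =>
      have hμ : μT (x + y) = μT x + μT y := map_add μT x y
      rw [map_add, map_add, map_add, map_add, map_add, map_add, hx, hy, hμ, lmulT_add_apply]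
      abel

end EquivDev

/-- There is an `A`-bimodule isomorphism
`θ : Ω¹A ≅ (A ⊗[ℂ] A) ⊕ ((A e) ⊗[ℂ] A)` with `θ(1 ⊗ u - u ⊗ 1) = (1 ⊗ 1, 0)` and
`θ(1 ⊗ v - v ⊗ 1) = (-(v ⊗ v), e ⊗ 1)`.  Bimodule equivariance of `θ` is expressed
elementwise via the maps `lmulT`, `rmulT` (the actions `a • (x ⊗ y) • b = (a x) ⊗ (y b)`),
reading the second component inside `A ⊗[ℂ] A` through the embedding `ιAeT`. -/
theorem stmt9 :
    ∃ θ : ΩT ≃ₗ[ℂ] (Talg ⊗[ℂ] Talg) × (AeT ⊗[ℂ] Talg),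
      (∀ (a : Talg) (ω ω' : ΩT), (ω' : Talg ⊗[ℂ] Talg) = lmulT a (ω : Talg ⊗[ℂ] Talg) →
        (θ ω').1 = lmulT a (θ ω).1 ∧ ιAeT (θ ω').2 = lmulT a (ιAeT (θ ω).2)) ∧
      (∀ (b : Talg) (ω ω' : ΩT), (ω' : Talg ⊗[ℂ] Talg) = rmulT b (ω : Talg ⊗[ℂ] Talg) →
        (θ ω').1 = rmulT b (θ ω).1 ∧ ιAeT (θ ω').2 = rmulT b (ιAeT (θ ω).2)) ∧
      θ ⟨(1 : Talg) ⊗ₜ[ℂ] Tu - Tu ⊗ₜ[ℂ] (1 : Talg), du_mem_ΩT⟩ =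
        ((1 : Talg) ⊗ₜ[ℂ] (1 : Talg), 0) ∧
      θ ⟨(1 : Talg) ⊗ₜ[ℂ] Tv - Tv ⊗ₜ[ℂ] (1 : Talg), dv_mem_ΩT⟩ =
        (-(Tv ⊗ₜ[ℂ] Tv), (⟨Tidem, Tidem_mem_AeT⟩ : AeT) ⊗ₜ[ℂ] (1 : Talg)) := by
  letI := TalgRing
  refine ⟨θT, ?_, ?_, ?_, ?_⟩
  · intro a ω ω' h
    rw [θT_apply, θT_apply, h]
    exact ⟨Φ1_lmulT_apply a _, ιF2_lmulT_apply a _⟩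
  · intro b ω ω' h
    have hμ : μT (ω : Talg ⊗[ℂ] Talg) = 0 := ω.2
    rw [θT_apply, θT_apply, h]
    constructor
    · rw [Φ1_rmulT_apply, hμ, lmulT_zero_apply, add_zero]
    · rw [ιF2_rmulT_apply, hμ, lmulT_zero_apply, add_zero]
  · rw [θT_apply]
    refine Prod.ext ?_ ?_
    · show Φ1 ((1 : Talg) ⊗ₜ[ℂ] Tu - Tu ⊗ₜ[ℂ] (1 : Talg)) = (1 : Talg) ⊗ₜ[ℂ] (1 : Talg)
      rw [map_sub, Φ1_tmul, Φ1_tmul, D1_one, map_zero, sub_zero, D1_u, lmulT_one_apply]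
    · show F2 ((1 : Talg) ⊗ₜ[ℂ] Tu - Tu ⊗ₜ[ℂ] (1 : Talg)) = 0
      rw [map_sub, F2_tmul, F2_tmul, D2_one, D2_u, map_zero, map_zero, map_zero]
      simp
  · rw [θT_apply]
    refine Prod.ext ?_ ?_
    · show Φ1 ((1 : Talg) ⊗ₜ[ℂ] Tv - Tv ⊗ₜ[ℂ] (1 : Talg)) = -(Tv ⊗ₜ[ℂ] Tv)
      rw [map_sub, Φ1_tmul, Φ1_tmul, D1_one, map_zero, sub_zero, D1_v, lmulT_one_apply]
    · show F2 ((1 : Talg) ⊗ₜ[ℂ] Tv - Tv ⊗ₜ[ℂ] (1 : Talg)) =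
        (⟨Tidem, Tidem_mem_AeT⟩ : AeT) ⊗ₜ[ℂ] (1 : Talg)
      rw [map_sub, F2_tmul, F2_tmul, D2_one, D2_v, map_zero, map_zero, sub_zero (G := AeT ⊗[ℂ] Talg),
        lAmap_one_apply, qT_tmul]
      rw [show reT Tidem = (⟨Tidem, Tidem_mem_AeT⟩ : AeT) from Subtype.ext (by simp [Tee])]
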